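/- Let F be a totally ordered family of partial isometries on H, let A_F be the set of operators mapping each initial space (ker V)ᗮ into the final space closure(ran V) for V ∈ F, and let T ∈ A_F. Then for every partial isometry W obtained as the infimum or supremum (in the Halmos–McLaughlin order) of a subset of F, T also maps (ker W)ᗮ into closure(ran W). Consequently A_F = A_{co(F)}, where co(F) is the smallest complete totally ordered family containing F. -/

import Mathlib

/-!
Let `W` be the infimum of a chain `S`, and `N` the intersection of the initial spaces of its
members. The members agree on `N`, so any `V₀ ∈ S` restricted to `N` is a lower bound of `S`,
whence `W = V₀` on `N`. Final spaces of partial isometries are closed, so for `x` in the initial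
space of `W` the vector `T x` lies in every `ran V`, `V ∈ S`; as `S` is a chain, the preimage `z`
of `T x` in the initial space of `V₀` lies in `N`, and `T x = V₀ z = W z`.

If `W` is the supremum of `S`, the restriction of `W` to the closed span `M` of the initial spaces
of `S` is an upper bound of `S`, so the initial space of `W` lies in `M`. Since `ran V ⊆ ran W`
for `V ≤ W`, `T` maps the span into `ran W`, hence `M` into its closure.

The set equality follows because `0` has zero initial space and each `V` is the supremum of `{V}`.
-/

open ContinuousLinearMap

variable {H : Type*} [NormedAddCommGroup H] [InnerProductSpace ℂ H] [CompleteSpace H]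

/-- A bounded operator is a partial isometry if it is isometric on `(ker V)ᗮ`. -/
def IsPartialIsometry (V : H →L[ℂ] H) : Prop :=
  ∀ x ∈ (LinearMap.ker (V : H →ₗ[ℂ] H))ᗮ, ‖V x‖ = ‖x‖

/-- The Halmos–McLaughlin order: `E ≤ F` iff `F` agrees with `E` on the initial
space `(ker E)ᗮ` of `E`. -/
def HMle (E F : H →L[ℂ] H) : Prop :=
  ∀ x ∈ (LinearMap.ker (E : H →ₗ[ℂ] H))ᗮ, F x = E x

/-- `W` is a supremum of `S` among partial isometries, in the Halmos–McLaughlin order. -/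
def IsSupHM (S : Set (H →L[ℂ] H)) (W : H →L[ℂ] H) : Prop :=
  (∀ V ∈ S, HMle V W) ∧ ∀ U : H →L[ℂ] H, IsPartialIsometry U → (∀ V ∈ S, HMle V U) → HMle W U

/-- `W` is an infimum of `S` among partial isometries, in the Halmos–McLaughlin order. -/
def IsInfHM (S : Set (H →L[ℂ] H)) (W : H →L[ℂ] H) : Prop :=
  (∀ V ∈ S, HMle W V) ∧ ∀ U : H →L[ℂ] H, IsPartialIsometry U → (∀ V ∈ S, HMle U V) → HMle U W

local notation "ker⊥ " V:max => (LinearMap.ker (ContinuousLinearMap.toLinearMap V))ᗮ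

open Submodule

section

variable {E : Type*} [NormedAddCommGroup E] [InnerProductSpace ℂ E]

theorem exists_mem_orthogonal_ker_apply_eq [CompleteSpace E] {V : E →L[ℂ] E} {y : E}
    (hy : y ∈ LinearMap.range (V : E →ₗ[ℂ] E)) : ∃ z ∈ ker⊥ V, V z = y := by
  obtain ⟨x, rfl⟩ := hy
  obtain ⟨k, hk, z, hz, rfl⟩ := (LinearMap.ker (V : E →ₗ[ℂ] E)).exists_add_mem_mem_orthogonal x
  have hVk : V k = 0 := hk
  exact ⟨z, hz, by simp [hVk]⟩

theorem isPartialIsometry_of_norm_map {V : E →L[ℂ] E} (hV : ∀ x, ‖V x‖ = ‖x‖) :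
    IsPartialIsometry V :=
  fun x _ ↦ hV x

theorem hMle_refl (V : E →L[ℂ] E) : HMle V V :=
  fun _ _ ↦ rfl

theorem isSupHM_singleton (V : E →L[ℂ] E) : IsSupHM {V} V :=
  ⟨fun _ hV' ↦ hV' ▸ hMle_refl V, fun _ _ hU ↦ hU V rfl⟩

namespace IsPartialIsometry

variable {V : E →L[ℂ] E}

theorem mem_orthogonal_ker_of_norm_apply_eq [CompleteSpace E] (hV : IsPartialIsometry V) {x : E}
    (hx : ‖V x‖ = ‖x‖) : x ∈ ker⊥ V := by
  obtain ⟨k, hk, z, hz, rfl⟩ := (LinearMap.ker (V : E →ₗ[ℂ] E)).exists_add_mem_mem_orthogonal x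
  have hVk : V k = 0 := hk
  have hpyth := norm_add_sq_eq_norm_sq_add_norm_sq_of_inner_eq_zero k z (hz k hk)
  rw [map_add, hVk, zero_add, hV z hz] at hx
  have : ‖k‖ * ‖k‖ = 0 := by rw [← hx] at hpyth; linarith
  rw [norm_eq_zero.mp (mul_self_eq_zero.mp this), zero_add]
  exact hz

theorem injOn (hV : IsPartialIsometry V) : Set.InjOn V (ker⊥ V) := by
  intro a ha b hb hab
  have hnorm := hV (a - b) (sub_mem ha hb)
  rw [map_sub, hab, sub_self, norm_zero, eq_comm, norm_eq_zero, sub_eq_zero] at hnorm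
  exact hnorm

theorem isClosed_range [CompleteSpace E] (hV : IsPartialIsometry V) :
    IsClosed (LinearMap.range (V : E →ₗ[ℂ] E) : Set E) := by
  let f : (ker⊥ V) →ₗᵢ[ℂ] E := ⟨(V : E →ₗ[ℂ] E).comp (ker⊥ V).subtype, fun x ↦ hV x x.2⟩
  have hf : Set.range f = LinearMap.range (V : E →ₗ[ℂ] E) := by
    ext y
    refine ⟨fun ⟨x, hx⟩ ↦ ⟨x, hx⟩, fun hy ↦ ?_⟩
    obtain ⟨z, hz, rfl⟩ := exists_mem_orthogonal_ker_apply_eq hy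
    exact ⟨⟨z, hz⟩, rfl⟩
  rw [← hf]
  exact f.isometry.isClosedEmbedding.isClosed_range

end IsPartialIsometry

namespace HMle

variable {V W : E →L[ℂ] E}

theorem orthogonal_ker_le [CompleteSpace E] (h : HMle V W) (hV : IsPartialIsometry V)
    (hW : IsPartialIsometry W) : ker⊥ V ≤ ker⊥ W :=
  fun x hx ↦ hW.mem_orthogonal_ker_of_norm_apply_eq (by rw [h x hx]; exact hV x hx)

theorem range_le [CompleteSpace E] (h : HMle V W) :
    LinearMap.range (V : E →ₗ[ℂ] E) ≤ LinearMap.range (W : E →ₗ[ℂ] E) := by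
  intro y hy
  obtain ⟨z, hz, rfl⟩ := exists_mem_orthogonal_ker_apply_eq hy
  exact ⟨z, h z hz⟩

theorem mem_orthogonal_ker_of_apply_mem_range [CompleteSpace E] (h : HMle V W)
    (hV : IsPartialIsometry V) (hW : IsPartialIsometry W) {z : E} (hz : z ∈ ker⊥ W)
    (hWz : W z ∈ LinearMap.range (V : E →ₗ[ℂ] E)) : z ∈ ker⊥ V := by
  obtain ⟨z', hz', hVz'⟩ := exists_mem_orthogonal_ker_apply_eq hWz
  obtain rfl : z' = z := hW.injOn (h.orthogonal_ker_le hV hW hz') hz (by rw [h z' hz', hVz'])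
  exact hz'

end HMle

section Restriction

variable {V : E →L[ℂ] E} {K : Submodule ℂ E} [K.HasOrthogonalProjection]

theorem ker_comp_starProjection (hV : IsPartialIsometry V) (hK : K ≤ ker⊥ V) :
    LinearMap.ker ((V ∘L K.starProjection : E →L[ℂ] E) : E →ₗ[ℂ] E) = Kᗮ := by
  ext z
  have hnorm := hV _ (hK (K.starProjection_apply_mem z))
  rw [LinearMap.mem_ker, ← starProjection_apply_eq_zero_iff,
    ← norm_eq_zero (a := K.starProjection z), ← hnorm, norm_eq_zero]
  rfl

theorem orthogonal_ker_comp_starProjection (hV : IsPartialIsometry V) (hK : K ≤ ker⊥ V) :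
    ker⊥ (V ∘L K.starProjection) = K := by
  rw [ker_comp_starProjection hV hK, orthogonal_orthogonal]

theorem IsPartialIsometry.comp_starProjection (hV : IsPartialIsometry V) (hK : K ≤ ker⊥ V) :
    IsPartialIsometry (V ∘L K.starProjection) := by
  intro z hz
  rw [orthogonal_ker_comp_starProjection hV hK] at hz
  simpa [starProjection_eq_self_iff.mpr hz] using hV z (hK hz)

theorem hMle_comp_starProjection_of_eqOn (hV : IsPartialIsometry V) (hK : K ≤ ker⊥ V)
    {V' : E →L[ℂ] E} (h : ∀ z ∈ K, V' z = V z) : HMle (V ∘L K.starProjection) V' := by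
  intro z hz
  rw [orthogonal_ker_comp_starProjection hV hK] at hz
  simpa [starProjection_eq_self_iff.mpr hz] using h z hz

theorem HMle.le_comp_starProjection {W : E →L[ℂ] E} (h : HMle V W) (hK : ker⊥ V ≤ K) :
    HMle V (W ∘L K.starProjection) := by
  intro z hz
  simpa [starProjection_eq_self_iff.mpr (hK hz)] using h z hz

end Restriction

theorem eq_zero_of_forall_hMle {W : E →L[ℂ] E} (hW : ∀ U, IsPartialIsometry U → HMle U W)
    (x : E) : x = 0 := by
  have hmem (U : E →L[ℂ] E) (hU : ∀ y, ‖U y‖ = ‖y‖) : x ∈ ker⊥ U := by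
    intro k hk
    have hk0 : k = 0 := by rw [← norm_eq_zero, ← hU]; exact norm_eq_zero.mpr hk
    simp [hk0]
  have h₁ : W x = x := hW 1 (isPartialIsometry_of_norm_map (by simp)) x (hmem 1 (by simp))
  have h₂ : W x = -x := hW (-1) (isPartialIsometry_of_norm_map (by simp)) x (hmem (-1) (by simp))
  have : IsAddTorsionFree E := .of_isTorsionFree ℂ E
  exact self_eq_neg.mp (h₁.symm.trans h₂)

variable [CompleteSpace E] {S : Set (E →L[ℂ] E)} {T W : E →L[ℂ] E}

theorem IsInfHM.eqOn_iInf_orthogonal_ker (hpi : ∀ V ∈ S, IsPartialIsometry V)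
    (hchain : ∀ V ∈ S, ∀ V' ∈ S, HMle V V' ∨ HMle V' V) (hinf : IsInfHM S W)
    {V₀ : E →L[ℂ] E} (hV₀ : V₀ ∈ S) {z : E} (hz : z ∈ ⨅ V ∈ S, ker⊥ V) : W z = V₀ z := by
  set N := ⨅ V ∈ S, ker⊥ V
  have hN : IsClosed (N : Set E) := by
    simp only [N, coe_iInf]
    exact isClosed_biInter fun V _ ↦ isClosed_orthogonal _
  have : CompleteSpace N := hN.completeSpace_coe
  have hNV : ∀ V ∈ S, N ≤ ker⊥ V := fun V hV ↦ biInf_le _ hV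
  have hV₀N := hNV V₀ hV₀
  have hU := (hpi V₀ hV₀).comp_starProjection hV₀N
  have hle : HMle (V₀ ∘L N.starProjection) W := by
    refine hinf.2 _ hU fun V hV ↦ hMle_comp_starProjection_of_eqOn (hpi V₀ hV₀) hV₀N fun y hy ↦ ?_
    rcases hchain V hV V₀ hV₀ with h | h
    · exact (h y (hNV V hV hy)).symm
    · exact h y (hV₀N hy)
  simpa [starProjection_eq_self_iff.mpr hz] using
    hle z (by rwa [orthogonal_ker_comp_starProjection (hpi V₀ hV₀) hV₀N])

theorem mapsTo_of_isInfHM (hpi : ∀ V ∈ S, IsPartialIsometry V)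
    (hchain : ∀ V ∈ S, ∀ V' ∈ S, HMle V V' ∨ HMle V' V)
    (hT : ∀ V ∈ S, Set.MapsTo T (ker⊥ V) (closure (LinearMap.range (V : E →ₗ[ℂ] E))))
    (hW : IsPartialIsometry W) (hinf : IsInfHM S W) :
    Set.MapsTo T (ker⊥ W) (closure (LinearMap.range (W : E →ₗ[ℂ] E))) := by
  intro x hx
  rcases S.eq_empty_or_nonempty with rfl | ⟨V₀, hV₀⟩
  · rw [eq_zero_of_forall_hMle (fun U hU ↦ hinf.2 U hU (by simp)) x, map_zero]
    exact subset_closure (zero_mem _)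
  have hTx : ∀ V ∈ S, T x ∈ LinearMap.range (V : E →ₗ[ℂ] E) := fun V hV ↦
    (hpi V hV).isClosed_range.closure_eq.subset <|
      hT V hV ((hinf.1 V hV).orthogonal_ker_le hW (hpi V hV) hx)
  obtain ⟨z, hz, hV₀z⟩ := exists_mem_orthogonal_ker_apply_eq (hTx V₀ hV₀)
  have hzN : z ∈ ⨅ V ∈ S, ker⊥ V := by
    simp only [mem_iInf]
    intro V hV
    rcases hchain V hV V₀ hV₀ with h | h
    · exact h.mem_orthogonal_ker_of_apply_mem_range (hpi V hV) (hpi V₀ hV₀) hz (hV₀z ▸ hTx V hV)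
    · exact h.orthogonal_ker_le (hpi V₀ hV₀) (hpi V hV) hz
  exact subset_closure ⟨z, (hinf.eqOn_iInf_orthogonal_ker hpi hchain hV₀ hzN).trans hV₀z⟩

theorem IsSupHM.orthogonal_ker_le_closure_iSup (hpi : ∀ V ∈ S, IsPartialIsometry V)
    (hW : IsPartialIsometry W) (hsup : IsSupHM S W) :
    ker⊥ W ≤ (⨆ V ∈ S, ker⊥ V).topologicalClosure := by
  set M := (⨆ V ∈ S, ker⊥ V).topologicalClosure
  have : CompleteSpace M := (isClosed_topologicalClosure _).completeSpace_coe
  have hMW : M ≤ ker⊥ W := topologicalClosure_minimal _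
    (iSup₂_le fun V hV ↦ (hsup.1 V hV).orthogonal_ker_le (hpi V hV) hW) (isClosed_orthogonal _)
  have hU := hW.comp_starProjection hMW
  have hWU : HMle W (W ∘L M.starProjection) := hsup.2 _ hU fun V hV ↦
    (hsup.1 V hV).le_comp_starProjection
      ((le_biSup (fun V ↦ ker⊥ V) hV).trans (le_topologicalClosure _))
  calc ker⊥ W ≤ ker⊥ (W ∘L M.starProjection) := hWU.orthogonal_ker_le hW hU
    _ = M := orthogonal_ker_comp_starProjection hW hMW

theorem mapsTo_of_isSupHM (hpi : ∀ V ∈ S, IsPartialIsometry V)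
    (hT : ∀ V ∈ S, Set.MapsTo T (ker⊥ V) (closure (LinearMap.range (V : E →ₗ[ℂ] E))))
    (hW : IsPartialIsometry W) (hsup : IsSupHM S W) :
    Set.MapsTo T (ker⊥ W) (closure (LinearMap.range (W : E →ₗ[ℂ] E))) := by
  have hspan : (⨆ V ∈ S, ker⊥ V) ≤ (LinearMap.range (W : E →ₗ[ℂ] E)).comap (T : E →ₗ[ℂ] E) :=
    iSup₂_le fun V hV x hx ↦ (hsup.1 V hV).range_le <|
      (hpi V hV).isClosed_range.closure_eq.subset (hT V hV hx)
  have hclosure : Set.MapsTo T (closure (⨆ V ∈ S, ker⊥ V : Submodule ℂ E))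
      (closure (LinearMap.range (W : E →ₗ[ℂ] E))) :=
    Set.MapsTo.closure (fun _ hx ↦ hspan hx) T.continuous
  rw [← topologicalClosure_coe] at hclosure
  exact hclosure.mono_left (hsup.orthogonal_ker_le_closure_iSup hpi hW)

theorem mapsTo_of_isInfHM_or_isSupHM {𝓕 : Set (E →L[ℂ] E)}
    (hpi : ∀ V ∈ 𝓕, IsPartialIsometry V) (hchain : ∀ V ∈ 𝓕, ∀ V' ∈ 𝓕, HMle V V' ∨ HMle V' V)
    (hT : ∀ V ∈ 𝓕, Set.MapsTo T (ker⊥ V) (closure (LinearMap.range (V : E →ₗ[ℂ] E))))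
    (hS : S ⊆ 𝓕) (hW : IsPartialIsometry W) (h : IsInfHM S W ∨ IsSupHM S W) :
    Set.MapsTo T (ker⊥ W) (closure (LinearMap.range (W : E →ₗ[ℂ] E))) :=
  h.elim
    (mapsTo_of_isInfHM (fun V hV ↦ hpi V (hS hV))
      (fun V hV V' hV' ↦ hchain V (hS hV) V' (hS hV')) (fun V hV ↦ hT V (hS hV)) hW)
    (mapsTo_of_isSupHM (fun V hV ↦ hpi V (hS hV)) (fun V hV ↦ hT V (hS hV)) hW)

end

theorem AF_eq_A_completeCover (𝓕 : Set (H →L[ℂ] H))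
    (hpi : ∀ V ∈ 𝓕, IsPartialIsometry V)
    (hTO : ∀ E ∈ 𝓕, ∀ F ∈ 𝓕, HMle E F ∨ HMle F E)
    (T : H →L[ℂ] H)
    (hT : ∀ V ∈ 𝓕, ∀ x ∈ (LinearMap.ker (V : H →ₗ[ℂ] H))ᗮ, T x ∈ closure (LinearMap.range (V : H →ₗ[ℂ] H) : Set H)) :
    (∀ S ⊆ 𝓕, ∀ W : H →L[ℂ] H, IsPartialIsometry W → (IsInfHM S W ∨ IsSupHM S W) →
      ∀ x ∈ (LinearMap.ker (W : H →ₗ[ℂ] H))ᗮ, T x ∈ closure (LinearMap.range (W : H →ₗ[ℂ] H) : Set H)) ∧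
    ({T' : H →L[ℂ] H | ∀ V ∈ 𝓕, ∀ x ∈ (LinearMap.ker (V : H →ₗ[ℂ] H))ᗮ,
        T' x ∈ closure (LinearMap.range (V : H →ₗ[ℂ] H) : Set H)} =
      {T' : H →L[ℂ] H | ∀ W ∈ insert (0 : H →L[ℂ] H)
          {W : H →L[ℂ] H | IsPartialIsometry W ∧ ∃ S ⊆ 𝓕, IsInfHM S W ∨ IsSupHM S W},
        ∀ x ∈ (LinearMap.ker (W : H →ₗ[ℂ] H))ᗮ, T' x ∈ closure (LinearMap.range (W : H →ₗ[ℂ] H) : Set H)}) := by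
  refine ⟨fun S hS W hW h ↦ mapsTo_of_isInfHM_or_isSupHM hpi hTO hT hS hW h, ?_⟩
  ext T'
  refine ⟨fun hT' ↦ ?_, fun hT' V hV ↦ hT' V <|
    Or.inr ⟨hpi V hV, {V}, Set.singleton_subset_iff.2 hV, Or.inr (isSupHM_singleton V)⟩⟩
  rintro W (rfl | ⟨hW, S, hS, h⟩)
  · intro x hx
    rw [show x = 0 by simpa using hx, map_zero]
    exact subset_closure (zero_mem _)
  · exact mapsTo_of_isInfHM_or_isSupHM hpi hTO hT' hS hW h
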